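/- Let ℝ×ℝ carry the strict product ordering ≦, and let G be a non-Abelian directed po-group satisfying RDP₁. Then the element ((1,1),0) is a strong unit of the lexicographic product (ℝ×ℝ) ×⃗ G, this po-group satisfies RDP, but RDP₁ fails in it. -/

import Mathlib

/-!
Let `H` be `ℝ × ℝ` with the strict order. An element of `H ×ₗ G` is positive iff its `H`-part
is strictly positive, or zero with positive `G`-part. To decompose `a₁ + a₂ = b₁ + b₂`, compare
the `H`-parts `p₁, q₁` of `a₁, b₁`. If `p₁ < q₁`, then `a₁ < b₁` and `(a₁, 0, -a₁ + b₁, b₂)` is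
a decomposition. If `p₁, q₁` are incomparable, all four `H`-parts are strictly positive; in `H`
they decompose into strictly positive pieces (coordinatewise, by density of `ℝ`), and the
`G`-parts can then be chosen freely. If `p₁ = q₁ = 0 < p₂`, the pieces `c₁₁, c₁₂, c₂₁` must lie
in `G` and `c₂₂` absorbs the rest; the equations close up as soon as `c₁₂` and `c₂₁` commute,
which RDP₁ provides when applied to `g + (-g + d) = h + (-h + d)` for a common upper bound `d`
(symmetrically when `p₁ = q₁ > 0 = p₂`).

RDP₁ fails because `(1,2)` and `(2,1)` are incomparable: in any decomposition of
`((1,2),0) + ((2,1),0) = ((2,1),0) + ((1,2),0)` both off-diagonal pieces have strictly positive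
`H`-part, so every `(δ, g)` with `δ > 0` small enough lies below them, whatever `g ∈ G` is.
-/

/-- A po-group satisfies RDP if every equation `a₁ + a₂ = b₁ + b₂` of positive elements
admits a Riesz decomposition by four positive elements. -/
def RDP (G : Type*) [AddGroup G] [PartialOrder G] : Prop :=
  ∀ a₁ a₂ b₁ b₂ : G, 0 ≤ a₁ → 0 ≤ a₂ → 0 ≤ b₁ → 0 ≤ b₂ → a₁ + a₂ = b₁ + b₂ →
    ∃ c₁₁ c₁₂ c₂₁ c₂₂ : G, 0 ≤ c₁₁ ∧ 0 ≤ c₁₂ ∧ 0 ≤ c₂₁ ∧ 0 ≤ c₂₂ ∧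
      a₁ = c₁₁ + c₁₂ ∧ a₂ = c₂₁ + c₂₂ ∧ b₁ = c₁₁ + c₂₁ ∧ b₂ = c₁₂ + c₂₂

/-- A po-group satisfies RDP₁ if every equation `a₁ + a₂ = b₁ + b₂` of positive elements
admits a Riesz decomposition `c₁₁, c₁₂, c₂₁, c₂₂ ≥ 0` in which any `0 ≤ x ≤ c₁₂` and
`0 ≤ y ≤ c₂₁` commute. -/
def RDP1 (G : Type*) [AddGroup G] [PartialOrder G] : Prop :=
  ∀ a₁ a₂ b₁ b₂ : G, 0 ≤ a₁ → 0 ≤ a₂ → 0 ≤ b₁ → 0 ≤ b₂ → a₁ + a₂ = b₁ + b₂ →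
    ∃ c₁₁ c₁₂ c₂₁ c₂₂ : G, 0 ≤ c₁₁ ∧ 0 ≤ c₁₂ ∧ 0 ≤ c₂₁ ∧ 0 ≤ c₂₂ ∧
      a₁ = c₁₁ + c₁₂ ∧ a₂ = c₂₁ + c₂₂ ∧ b₁ = c₁₁ + c₂₁ ∧ b₂ = c₁₂ + c₂₂ ∧
      ∀ x y : G, 0 ≤ x → x ≤ c₁₂ → 0 ≤ y → y ≤ c₂₁ → x + y = y + x

/-- `ℝ × ℝ` carrying the strict product ordering. -/
def StrictRR : Type := ℝ × ℝ

instance : AddCommGroup StrictRR := inferInstanceAs (AddCommGroup (ℝ × ℝ))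

/-- The strict product ordering: `(a, b) ≦ (c, d)` iff `(a = c ∧ b = d)` or
`(a < c ∧ b < d)`. -/
instance : PartialOrder StrictRR where
  le x y := x = y ∨ (Prod.fst x < Prod.fst y ∧ Prod.snd x < Prod.snd y)
  le_refl x := Or.inl rfl
  le_trans x y z hxy hyz := by
    rcases hxy with rfl | hxy
    · exact hyz
    · rcases hyz with rfl | hyz
      · exact Or.inr hxy
      · exact Or.inr ⟨lt_trans hxy.1 hyz.1, lt_trans hxy.2 hyz.2⟩
  le_antisymm x y hxy hyx := by
    rcases hxy with rfl | hxy
    · rfl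
    · rcases hyx with rfl | hyx
      · rfl
      · exact absurd hyx.1 (lt_asymm hxy.1)

section RieszDecomp

variable {G K : Type*}

def RieszDecomp [Add G] (P : G → Prop) (a₁ a₂ b₁ b₂ : G) : Prop :=
  ∃ c₁₁ c₁₂ c₂₁ c₂₂ : G, P c₁₁ ∧ P c₁₂ ∧ P c₂₁ ∧ P c₂₂ ∧
    a₁ = c₁₁ + c₁₂ ∧ a₂ = c₂₁ + c₂₂ ∧ b₁ = c₁₁ + c₂₁ ∧ b₂ = c₁₂ + c₂₂

namespace RieszDecomp

variable [Add G] {P : G → Prop} {a₁ a₂ b₁ b₂ : G}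

theorem mono {Q : G → Prop} (hPQ : ∀ x, P x → Q x) (h : RieszDecomp P a₁ a₂ b₁ b₂) :
    RieszDecomp Q a₁ a₂ b₁ b₂ := by
  obtain ⟨c₁₁, c₁₂, c₂₁, c₂₂, h₁₁, h₁₂, h₂₁, h₂₂, eqs⟩ := h
  exact ⟨c₁₁, c₁₂, c₂₁, c₂₂, hPQ _ h₁₁, hPQ _ h₁₂, hPQ _ h₂₁, hPQ _ h₂₂, eqs⟩

theorem symm (h : RieszDecomp P a₁ a₂ b₁ b₂) : RieszDecomp P b₁ b₂ a₁ a₂ := by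
  obtain ⟨c₁₁, c₁₂, c₂₁, c₂₂, h₁₁, h₁₂, h₂₁, h₂₂, ea₁, ea₂, eb₁, eb₂⟩ := h
  exact ⟨c₁₁, c₂₁, c₁₂, c₂₂, h₁₁, h₂₁, h₁₂, h₂₂, eb₁, eb₂, ea₁, ea₂⟩

theorem map [Add K] {F : Type*} [FunLike F G K] [AddHomClass F G K] {Q : K → Prop} (f : F)
    (hf : ∀ x, P x → Q (f x)) (h : RieszDecomp P a₁ a₂ b₁ b₂) :
    RieszDecomp Q (f a₁) (f a₂) (f b₁) (f b₂) := by
  obtain ⟨c₁₁, c₁₂, c₂₁, c₂₂, h₁₁, h₁₂, h₂₁, h₂₂, rfl, rfl, rfl, rfl⟩ := h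
  exact ⟨f c₁₁, f c₁₂, f c₂₁, f c₂₂, hf _ h₁₁, hf _ h₁₂, hf _ h₂₁, hf _ h₂₂,
    map_add f _ _, map_add f _ _, map_add f _ _, map_add f _ _⟩

theorem prod [Add K] {Q : K → Prop} {a₁' a₂' b₁' b₂' : K} (h : RieszDecomp P a₁ a₂ b₁ b₂)
    (h' : RieszDecomp Q a₁' a₂' b₁' b₂') :
    RieszDecomp (fun x : G × K => P x.1 ∧ Q x.2) (a₁, a₁') (a₂, a₂') (b₁, b₁') (b₂, b₂') := by
  obtain ⟨c₁₁, c₁₂, c₂₁, c₂₂, h₁₁, h₁₂, h₂₁, h₂₂, rfl, rfl, rfl, rfl⟩ := h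
  obtain ⟨d₁₁, d₁₂, d₂₁, d₂₂, k₁₁, k₁₂, k₂₁, k₂₂, rfl, rfl, rfl, rfl⟩ := h'
  exact ⟨(c₁₁, d₁₁), (c₁₂, d₁₂), (c₂₁, d₂₁), (c₂₂, d₂₂), ⟨h₁₁, k₁₁⟩, ⟨h₁₂, k₁₂⟩, ⟨h₂₁, k₂₁⟩,
    ⟨h₂₂, k₂₂⟩, rfl, rfl, rfl, rfl⟩

end RieszDecomp

variable [AddGroup G] {P : G → Prop} {a₁ a₂ b₁ b₂ : G}

theorem rieszDecomp_of_neg_add (h : a₁ + a₂ = b₁ + b₂) (h₀ : P 0) (ha₁ : P a₁)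
    (hb₂ : P b₂) (hd : P (-a₁ + b₁)) : RieszDecomp P a₁ a₂ b₁ b₂ := by
  refine ⟨a₁, 0, -a₁ + b₁, b₂, ha₁, h₀, hd, hb₂, (add_zero a₁).symm, ?_, by simp,
    (zero_add b₂).symm⟩
  rw [add_assoc, ← h, neg_add_cancel_left]

theorem rieszDecomp_of_addCommute_left {c₁₁ c₁₂ c₂₁ : G} (h : a₁ + a₂ = b₁ + b₂)
    (ha₁ : a₁ = c₁₁ + c₁₂) (hb₁ : b₁ = c₁₁ + c₂₁) (hc : AddCommute c₁₂ c₂₁) (h₁₁ : P c₁₁)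
    (h₁₂ : P c₁₂) (h₂₁ : P c₂₁) (h₂₂ : P (-c₂₁ + a₂)) : RieszDecomp P a₁ a₂ b₁ b₂ := by
  refine ⟨c₁₁, c₁₂, c₂₁, -c₂₁ + a₂, h₁₁, h₁₂, h₂₁, h₂₂, ha₁, (add_neg_cancel_left _ _).symm,
    hb₁, ?_⟩
  rw [← add_assoc, hc.neg_right.eq, ← add_right_inj b₁, ← h, ha₁, hb₁]
  simp only [add_assoc, add_neg_cancel_left]

theorem rieszDecomp_of_addCommute_right {c₁₂ c₂₁ c₂₂ : G} (h : a₁ + a₂ = b₁ + b₂)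
    (ha₂ : a₂ = c₂₁ + c₂₂) (hb₂ : b₂ = c₁₂ + c₂₂) (hc : AddCommute c₁₂ c₂₁)
    (h₁₁ : P (a₁ + -c₁₂)) (h₁₂ : P c₁₂) (h₂₁ : P c₂₁) (h₂₂ : P c₂₂) :
    RieszDecomp P a₁ a₂ b₁ b₂ := by
  refine ⟨a₁ + -c₁₂, c₁₂, c₂₁, c₂₂, h₁₁, h₁₂, h₂₁, h₂₂, (neg_add_cancel_right _ _).symm, ha₂,
    ?_, hb₂⟩
  rw [add_assoc, hc.neg_left.eq, ← add_left_inj b₂, ← h, ha₂, hb₂]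
  simp only [add_assoc, neg_add_cancel_left]

end RieszDecomp

theorem RDP1.rdp {G : Type*} [AddGroup G] [PartialOrder G] (hG : RDP1 G) : RDP G := by
  intro a₁ a₂ b₁ b₂ ha₁ ha₂ hb₁ hb₂ h
  obtain ⟨c₁₁, c₁₂, c₂₁, c₂₂, h₁₁, h₁₂, h₂₁, h₂₂, e₁, e₂, e₃, e₄, -⟩ :=
    hG a₁ a₂ b₁ b₂ ha₁ ha₂ hb₁ hb₂ h
  exact ⟨c₁₁, c₁₂, c₂₁, c₂₂, h₁₁, h₁₂, h₂₁, h₂₂, e₁, e₂, e₃, e₄⟩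

section RDP1

variable {G : Type*} [AddGroup G] [PartialOrder G] {g h : G}

theorem RDP1.exists_addCommute_left [AddLeftMono G] [IsDirected G (· ≤ ·)] (hG : RDP1 G)
    (hg : 0 ≤ g) (hh : 0 ≤ h) :
    ∃ x y z : G, 0 ≤ x ∧ 0 ≤ y ∧ 0 ≤ z ∧ g = x + y ∧ h = x + z ∧ AddCommute y z := by
  obtain ⟨d, hgd, hhd⟩ := directed_of (· ≤ ·) g h
  obtain ⟨c₁₁, c₁₂, c₂₁, -, h₁₁, h₁₂, h₂₁, -, e₁, -, e₃, -, hc⟩ :=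
    hG g (-g + d) h (-h + d) hg (le_neg_add_iff_add_le.2 (by simpa using hgd)) hh
      (le_neg_add_iff_add_le.2 (by simpa using hhd)) (by simp only [add_neg_cancel_left])
  exact ⟨c₁₁, c₁₂, c₂₁, h₁₁, h₁₂, h₂₁, e₁, e₃, hc c₁₂ c₂₁ h₁₂ le_rfl h₂₁ le_rfl⟩

theorem RDP1.exists_addCommute_right [AddRightMono G] [IsDirected G (· ≤ ·)] (hG : RDP1 G)
    (hg : 0 ≤ g) (hh : 0 ≤ h) :
    ∃ x y z : G, 0 ≤ x ∧ 0 ≤ y ∧ 0 ≤ z ∧ g = y + x ∧ h = z + x ∧ AddCommute z y := by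
  obtain ⟨d, hgd, hhd⟩ := directed_of (· ≤ ·) g h
  obtain ⟨-, c₁₂, c₂₁, c₂₂, -, h₁₂, h₂₁, h₂₂, -, e₂, -, e₄, hc⟩ :=
    hG (d - g) g (d - h) h (sub_nonneg.2 hgd) hg (sub_nonneg.2 hhd) hh
      (by simp only [sub_add_cancel])
  exact ⟨c₂₂, c₂₁, c₁₂, h₂₂, h₂₁, h₁₂, e₂, e₄, hc c₁₂ c₂₁ h₁₂ le_rfl h₂₁ le_rfl⟩

end RDP1

def StrictRDP (H : Type*) [Add H] [Zero H] [LT H] : Prop :=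
  ∀ p₁ p₂ q₁ q₂ : H, 0 < p₁ → 0 < p₂ → 0 < q₁ → 0 < q₂ → p₁ + p₂ = q₁ + q₂ →
    RieszDecomp (0 < ·) p₁ p₂ q₁ q₂

theorem strictRDP_of_denselyOrdered (K : Type*) [AddCommGroup K] [LinearOrder K]
    [IsOrderedAddMonoid K] [DenselyOrdered K] : StrictRDP K := by
  intro p₁ p₂ q₁ q₂ hp₁ hp₂ hq₁ hq₂ h
  have hp₂_eq : p₂ = q₁ + q₂ - p₁ := by rw [← h]; abel
  -- `γ` will be the corner `c₁₁`; its bounds make the other three corners positive.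
  obtain ⟨γ, hγlo, hγhi⟩ : ∃ γ, max 0 (p₁ - q₂) < γ ∧ γ < min p₁ q₁ := by
    refine exists_between (max_lt (lt_min hp₁ hq₁) (lt_min (sub_lt_self _ hq₂) ?_))
    rw [sub_lt_iff_lt_add, ← h]
    exact lt_add_of_pos_right _ hp₂
  rw [max_lt_iff] at hγlo
  rw [lt_min_iff] at hγhi
  refine ⟨γ, p₁ - γ, q₁ - γ, γ - (p₁ - q₂), hγlo.1, sub_pos.2 hγhi.1, sub_pos.2 hγhi.2,
    sub_pos.2 hγlo.2, by abel, by rw [hp₂_eq]; abel, by abel, by abel⟩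

theorem pos_of_not_add_le_add {H : Type*} [AddMonoid H] [PartialOrder H] [AddLeftMono H]
    {x y z : H} (hy : 0 ≤ y) (hz : 0 ≤ z) (h : ¬x + y ≤ x + z) : 0 < y := by
  refine hy.lt_of_ne ?_
  rintro rfl
  exact h (by simpa using le_add_of_nonneg_right hz)

theorem pos_of_add_eq_add_of_not_le {H : Type*} [AddMonoid H] [PartialOrder H] [AddLeftMono H]
    {p₁ p₂ q₁ q₂ : H} (hp₁ : 0 ≤ p₁) (hp₂ : 0 ≤ p₂) (hq₁ : 0 ≤ q₁) (hq₂ : 0 ≤ q₂)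
    (h : p₁ + p₂ = q₁ + q₂) (hpq : ¬p₁ ≤ q₁) (hqp : ¬q₁ ≤ p₁) :
    0 < p₁ ∧ 0 < p₂ ∧ 0 < q₁ ∧ 0 < q₂ := by
  refine ⟨hp₁.lt_of_ne ?_, hp₂.lt_of_ne ?_, hq₁.lt_of_ne ?_, hq₂.lt_of_ne ?_⟩ <;> rintro rfl
  · exact hpq hq₁
  · rw [add_zero] at h
    exact hqp (h ▸ le_add_of_nonneg_right hq₂)
  · exact hqp hp₁
  · rw [add_zero] at h
    exact hpq (h ▸ le_add_of_nonneg_right hp₂)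

namespace StrictRR

theorem le_def {x y : StrictRR} : x ≤ y ↔ x = y ∨ x.1 < y.1 ∧ x.2 < y.2 := Iff.rfl

theorem lt_def {x y : StrictRR} : x < y ↔ x.1 < y.1 ∧ x.2 < y.2 := by
  rw [lt_iff_le_and_ne, le_def]
  constructor
  · rintro ⟨rfl | h, hne⟩
    · exact absurd rfl hne
    · exact h
  · exact fun h => ⟨Or.inr h, fun he => h.1.ne (congrArg Prod.fst he)⟩

instance : IsOrderedAddMonoid StrictRR where
  add_le_add_left x y h z := by
    rcases h with rfl | ⟨h₁, h₂⟩
    · exact le_rfl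
    · exact Or.inr ⟨add_lt_add_left h₁ z.1, add_lt_add_left h₂ z.2⟩

instance : DenselyOrdered StrictRR where
  dense x y h := by
    rw [lt_def] at h
    refine ⟨((x.1 + y.1) / 2, (x.2 + y.2) / 2), lt_def.2 ⟨?_, ?_⟩, lt_def.2 ⟨?_, ?_⟩⟩ <;>
      dsimp only <;> linarith [h.1, h.2]

theorem strictRDP : StrictRDP StrictRR := by
  intro p₁ p₂ q₁ q₂ hp₁ hp₂ hq₁ hq₂ h
  rw [lt_def] at hp₁ hp₂ hq₁ hq₂
  have hR := strictRDP_of_denselyOrdered ℝ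
  exact ((hR _ _ _ _ hp₁.1 hp₂.1 hq₁.1 hq₂.1 (congrArg Prod.fst h)).prod
    (hR _ _ _ _ hp₁.2 hp₂.2 hq₁.2 hq₂.2 (congrArg Prod.snd h))).mono fun _ => lt_def.2

theorem exists_lt_nsmul_one_one (p : StrictRR) :
    ∃ n : ℕ, p < n • (show StrictRR from ((1 : ℝ), (1 : ℝ))) := by
  obtain ⟨n, hn⟩ := exists_nat_gt (max p.1 p.2)
  rw [max_lt_iff] at hn
  refine ⟨n, lt_def.2 ?_⟩
  change p.1 < (n • ((1 : ℝ), (1 : ℝ))).1 ∧ p.2 < (n • ((1 : ℝ), (1 : ℝ))).2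
  simpa using hn

theorem not_le_of_lt_or_lt {x y : StrictRR} (h : y.1 < x.1 ∨ y.2 < x.2) : ¬x ≤ y := by
  rintro (rfl | hxy)
  · exact h.elim (lt_irrefl _) (lt_irrefl _)
  · exact h.elim (fun h => hxy.1.not_gt h) (fun h => hxy.2.not_gt h)

end StrictRR

def IsStrongUnit {G : Type*} [AddMonoid G] [Preorder G] (u : G) : Prop :=
  0 ≤ u ∧ ∀ g : G, ∃ n : ℕ, g ≤ n • u

section Lex

variable {H G : Type*}

theorem toLex_nonneg_iff [AddMonoid H] [PartialOrder H] [AddMonoid G] [PartialOrder G]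
    {p : H} {g : G} : 0 ≤ toLex (p, g) ↔ 0 < p ∨ 0 = p ∧ 0 ≤ g :=
  Prod.Lex.toLex_le_toLex

theorem nonneg_of_toLex_nonneg [AddMonoid H] [PartialOrder H] [AddMonoid G] [PartialOrder G]
    {p : H} {g : G} (h : 0 ≤ toLex (p, g)) : 0 ≤ p :=
  (toLex_nonneg_iff.1 h).elim le_of_lt fun h => h.1.le

theorem toLex_nonneg_of_pos [AddMonoid H] [PartialOrder H] [AddMonoid G] [PartialOrder G]
    {p : H} (hp : 0 < p) {g : G} : 0 ≤ toLex (p, g) :=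
  toLex_nonneg_iff.2 (Or.inl hp)

theorem toLex_zero_nonneg_iff [AddMonoid H] [PartialOrder H] [AddMonoid G] [PartialOrder G]
    {g : G} : 0 ≤ toLex ((0 : H), g) ↔ 0 ≤ g := by
  simp [toLex_nonneg_iff]

theorem toLex_add_toLex [AddMonoid H] [AddMonoid G] (p q : H) (g h : G) :
    toLex (p, g) + toLex (q, h) = toLex (p + q, g + h) := rfl

theorem isStrongUnit_toLex [AddMonoid H] [PartialOrder H] [AddMonoid G] [PartialOrder G]
    {u : H} (hu₀ : 0 < u) (hu : ∀ p : H, ∃ n : ℕ, p < n • u) :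
    IsStrongUnit (toLex (u, (0 : G))) := by
  refine ⟨toLex_nonneg_of_pos hu₀, fun x => ?_⟩
  obtain ⟨n, hn⟩ := hu (ofLex x).1
  refine ⟨n, ?_⟩
  change x ≤ toLex (n • u, n • (0 : G))
  rw [nsmul_zero]
  exact Prod.Lex.toLex_le_toLex.2 (Or.inl hn)

theorem rieszDecomp_lex_of_fst_pos [AddMonoid H] [PartialOrder H] [AddGroup G] [PartialOrder G]
    {p₁ p₂ q₁ q₂ : H} {g₁ g₂ h₁ h₂ : G}
    (hp : RieszDecomp (0 < ·) p₁ p₂ q₁ q₂) (hg : g₁ + g₂ = h₁ + h₂) :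
    RieszDecomp (0 ≤ ·) (toLex (p₁, g₁)) (toLex (p₂, g₂)) (toLex (q₁, h₁)) (toLex (q₂, h₂)) := by
  obtain ⟨γ₁₁, γ₁₂, γ₂₁, γ₂₂, h₁₁, h₁₂, h₂₁, h₂₂, rfl, rfl, rfl, rfl⟩ := hp
  refine ⟨toLex (γ₁₁, g₁), toLex (γ₁₂, 0), toLex (γ₂₁, -g₁ + h₁), toLex (γ₂₂, h₂),
    toLex_nonneg_of_pos h₁₁, toLex_nonneg_of_pos h₁₂, toLex_nonneg_of_pos h₂₁,
    toLex_nonneg_of_pos h₂₂, ?_, ?_, ?_, ?_⟩ <;>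
    rw [toLex_add_toLex]
  · rw [add_zero]
  · rw [add_assoc, ← hg, neg_add_cancel_left]
  · rw [add_neg_cancel_left]
  · rw [zero_add]

variable [AddGroup H] [PartialOrder H] [AddGroup G] [PartialOrder G]

theorem rieszDecomp_lex_of_fst_lt [AddLeftMono H] {p₁ q₁ : H} {g₁ h₁ : G} {a₂ b₂ : H ×ₗ G}
    (hpq : p₁ < q₁) (h : toLex (p₁, g₁) + a₂ = toLex (q₁, h₁) + b₂) (ha₁ : 0 ≤ toLex (p₁, g₁))
    (hb₂ : 0 ≤ b₂) : RieszDecomp (0 ≤ ·) (toLex (p₁, g₁)) a₂ (toLex (q₁, h₁)) b₂ :=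
  rieszDecomp_of_neg_add h le_rfl ha₁ hb₂ (toLex_nonneg_of_pos (lt_neg_add_iff_lt.2 hpq))

theorem rieszDecomp_lex_of_fst_zero_left [AddLeftMono G] [IsDirected G (· ≤ ·)] (hG : RDP1 G)
    {p : H} {g₁ g₂ h₁ h₂ : G} (hp : 0 < p) (hg₁ : 0 ≤ g₁) (hh₁ : 0 ≤ h₁) (h : g₁ + g₂ = h₁ + h₂) :
    RieszDecomp (0 ≤ ·) (toLex (0, g₁)) (toLex (p, g₂)) (toLex (0, h₁)) (toLex (p, h₂)) := by
  obtain ⟨x, y, z, hx, hy, hz, rfl, rfl, hyz⟩ := hG.exists_addCommute_left hg₁ hh₁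
  refine rieszDecomp_of_addCommute_left (c₁₁ := toLex (0, x)) (c₁₂ := toLex (0, y))
    (c₂₁ := toLex (0, z)) ?_ ?_ ?_ ?_ (toLex_zero_nonneg_iff.2 hx) (toLex_zero_nonneg_iff.2 hy)
    (toLex_zero_nonneg_iff.2 hz) ?_
  · rw [toLex_add_toLex, toLex_add_toLex, h]
  · rw [toLex_add_toLex, add_zero]
  · rw [toLex_add_toLex, add_zero]
  · rw [AddCommute, AddSemiconjBy, toLex_add_toLex, toLex_add_toLex, hyz.eq]
  · show 0 ≤ toLex (-0 + p, -z + g₂)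
    exact toLex_nonneg_of_pos (by rwa [neg_zero, zero_add])

theorem rieszDecomp_lex_of_fst_zero_right [AddRightMono G] [IsDirected G (· ≤ ·)] (hG : RDP1 G)
    {p : H} {g₁ g₂ h₁ h₂ : G} (hp : 0 < p) (hg₂ : 0 ≤ g₂) (hh₂ : 0 ≤ h₂) (h : g₁ + g₂ = h₁ + h₂) :
    RieszDecomp (0 ≤ ·) (toLex (p, g₁)) (toLex (0, g₂)) (toLex (p, h₁)) (toLex (0, h₂)) := by
  obtain ⟨x, y, z, hx, hy, hz, rfl, rfl, hzy⟩ := hG.exists_addCommute_right hg₂ hh₂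
  refine rieszDecomp_of_addCommute_right (c₁₂ := toLex (0, z)) (c₂₁ := toLex (0, y))
    (c₂₂ := toLex (0, x)) ?_ ?_ ?_ ?_ ?_ (toLex_zero_nonneg_iff.2 hz) (toLex_zero_nonneg_iff.2 hy)
    (toLex_zero_nonneg_iff.2 hx)
  · rw [toLex_add_toLex, toLex_add_toLex, h]
  · rw [toLex_add_toLex, add_zero]
  · rw [toLex_add_toLex, add_zero]
  · rw [AddCommute, AddSemiconjBy, toLex_add_toLex, toLex_add_toLex, hzy.eq]
  · show 0 ≤ toLex (p + -0, g₁ + -z)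
    exact toLex_nonneg_of_pos (by rwa [neg_zero, add_zero])

theorem rieszDecomp_lex_of_fst_eq [AddLeftMono G] [AddRightMono G] [IsDirected G (· ≤ ·)]
    (hH : StrictRDP H) (hG : RDP1 G) {p₁ p₂ : H} {g₁ g₂ h₁ h₂ : G}
    (ha₁ : 0 ≤ toLex (p₁, g₁)) (ha₂ : 0 ≤ toLex (p₂, g₂)) (hb₁ : 0 ≤ toLex (p₁, h₁))
    (hb₂ : 0 ≤ toLex (p₂, h₂)) (h : g₁ + g₂ = h₁ + h₂) :
    RieszDecomp (0 ≤ ·) (toLex (p₁, g₁)) (toLex (p₂, g₂)) (toLex (p₁, h₁)) (toLex (p₂, h₂)) := by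
  rw [toLex_nonneg_iff] at ha₁ ha₂
  rcases ha₁ with hp₁ | ⟨rfl, hg₁⟩ <;> rcases ha₂ with hp₂ | ⟨rfl, hg₂⟩
  · exact rieszDecomp_lex_of_fst_pos (hH _ _ _ _ hp₁ hp₂ hp₁ hp₂ rfl) h
  · exact rieszDecomp_lex_of_fst_zero_right hG hp₁ hg₂ (toLex_zero_nonneg_iff.1 hb₂) h
  · exact rieszDecomp_lex_of_fst_zero_left hG hp₂ hg₁ (toLex_zero_nonneg_iff.1 hb₁) h
  · exact RieszDecomp.map (OrderAddMonoidHom.inrₗ H G) (fun _ => toLex_zero_nonneg_iff.2)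
      (hG.rdp g₁ g₂ h₁ h₂ hg₁ hg₂ (toLex_zero_nonneg_iff.1 hb₁)
        (toLex_zero_nonneg_iff.1 hb₂) h)

theorem rdp_lex [AddLeftMono H] [AddLeftMono G] [AddRightMono G] [IsDirected G (· ≤ ·)]
    (hH : StrictRDP H) (hG : RDP1 G) : RDP (H ×ₗ G) := by
  intro a₁ a₂ b₁ b₂ ha₁ ha₂ hb₁ hb₂ h
  obtain ⟨⟨p₁, g₁⟩, rfl⟩ := toLex.surjective a₁
  obtain ⟨⟨p₂, g₂⟩, rfl⟩ := toLex.surjective a₂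
  obtain ⟨⟨q₁, h₁⟩, rfl⟩ := toLex.surjective b₁
  obtain ⟨⟨q₂, h₂⟩, rfl⟩ := toLex.surjective b₂
  have hp : p₁ + p₂ = q₁ + q₂ := congrArg (fun x => (ofLex x).1) h
  have hg : g₁ + g₂ = h₁ + h₂ := congrArg (fun x => (ofLex x).2) h
  show RieszDecomp (0 ≤ ·) _ _ _ _
  by_cases hpq : p₁ ≤ q₁
  · rcases hpq.lt_or_eq with hlt | rfl
    · exact rieszDecomp_lex_of_fst_lt hlt h ha₁ hb₂
    · obtain rfl : p₂ = q₂ := add_left_cancel hp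
      exact rieszDecomp_lex_of_fst_eq hH hG ha₁ ha₂ hb₁ hb₂ hg
  by_cases hqp : q₁ ≤ p₁
  · exact (rieszDecomp_lex_of_fst_lt (hqp.lt_of_not_ge hpq) h.symm hb₁ ha₂).symm
  obtain ⟨hp₁, hp₂, hq₁, hq₂⟩ := pos_of_add_eq_add_of_not_le (nonneg_of_toLex_nonneg ha₁)
    (nonneg_of_toLex_nonneg ha₂) (nonneg_of_toLex_nonneg hb₁) (nonneg_of_toLex_nonneg hb₂) hp
    hpq hqp
  exact rieszDecomp_lex_of_fst_pos (hH _ _ _ _ hp₁ hp₂ hq₁ hq₂ hp) hg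

end Lex

theorem not_rdp1_lex {H G : Type*} [AddCommGroup H] [PartialOrder H] [IsOrderedAddMonoid H]
    [DenselyOrdered H] [AddGroup G] [PartialOrder G] (hna : ∃ x y : G, x + y ≠ y + x) {p q : H}
    (hp : 0 < p) (hq : 0 < q) (hpq : ¬p ≤ q) (hqp : ¬q ≤ p) : ¬RDP1 (H ×ₗ G) := by
  intro hR
  obtain ⟨x, y, hxy⟩ := hna
  obtain ⟨c₁₁, c₁₂, c₂₁, -, -, h₁₂, h₂₁, -, e₁, -, e₃, -, hc⟩ :=
    hR (toLex (p, 0)) (toLex (q, 0)) (toLex (q, 0)) (toLex (p, 0)) (toLex_nonneg_of_pos hp)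
      (toLex_nonneg_of_pos hq) (toLex_nonneg_of_pos hq) (toLex_nonneg_of_pos hp)
      (by rw [toLex_add_toLex, toLex_add_toLex, add_comm p])
  obtain ⟨⟨γ₁₁, g₁₁⟩, rfl⟩ := toLex.surjective c₁₁
  obtain ⟨⟨γ₁₂, g₁₂⟩, rfl⟩ := toLex.surjective c₁₂
  obtain ⟨⟨γ₂₁, g₂₁⟩, rfl⟩ := toLex.surjective c₂₁
  obtain rfl : p = γ₁₁ + γ₁₂ := congrArg (fun c => (ofLex c).1) e₁
  obtain rfl : q = γ₁₁ + γ₂₁ := congrArg (fun c => (ofLex c).1) e₃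
  obtain ⟨δ, hδ, hδγ⟩ := exists_between (pos_of_not_add_le_add (nonneg_of_toLex_nonneg h₁₂)
    (nonneg_of_toLex_nonneg h₂₁) hpq)
  obtain ⟨ε, hε, hεγ⟩ := exists_between (pos_of_not_add_le_add (nonneg_of_toLex_nonneg h₂₁)
    (nonneg_of_toLex_nonneg h₁₂) hqp)
  have hcomm := hc (toLex (δ, x)) (toLex (ε, y)) (toLex_nonneg_of_pos hδ)
    (Prod.Lex.toLex_le_toLex.2 (Or.inl hδγ)) (toLex_nonneg_of_pos hε)
    (Prod.Lex.toLex_le_toLex.2 (Or.inl hεγ))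
  exact hxy (congrArg (fun c => (ofLex c).2) hcomm)

/-- If `ℝ × ℝ` carries the strict product ordering and `G` is a non-Abelian
directed po-group satisfying RDP₁, then `((1,1), 0)` is a strong unit of the
lexicographic product `(ℝ × ℝ) ×ₗ G`, this po-group satisfies RDP, but RDP₁ fails. -/
theorem strictRR_lex_strong_unit_rdp_not_rdp1 {G : Type*} [AddGroup G] [PartialOrder G]
    [CovariantClass G G (· + ·) (· ≤ ·)]
    [CovariantClass G G (Function.swap (· + ·)) (· ≤ ·)]
    (hdir : ∀ x y : G, ∃ z : G, x ≤ z ∧ y ≤ z)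
    (hna : ∃ x y : G, x + y ≠ y + x)
    (hG : RDP1 G) :
    (0 ≤ toLex ((show StrictRR from ((1 : ℝ), (1 : ℝ))), (0 : G)) ∧
      ∀ x : StrictRR ×ₗ G, ∃ n : ℕ,
        x ≤ n • toLex ((show StrictRR from ((1 : ℝ), (1 : ℝ))), (0 : G))) ∧
    RDP (StrictRR ×ₗ G) ∧ ¬ RDP1 (StrictRR ×ₗ G) :=
  have : IsDirected G (· ≤ ·) := ⟨hdir⟩
  ⟨isStrongUnit_toLex (StrictRR.lt_def.2 ⟨one_pos, one_pos⟩) StrictRR.exists_lt_nsmul_one_one,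
    rdp_lex StrictRR.strictRDP hG,
    not_rdp1_lex hna (p := (show StrictRR from ((1 : ℝ), (2 : ℝ))))
      (q := (show StrictRR from ((2 : ℝ), (1 : ℝ)))) (StrictRR.lt_def.2 ⟨one_pos, two_pos⟩)
      (StrictRR.lt_def.2 ⟨two_pos, one_pos⟩) (StrictRR.not_le_of_lt_or_lt (.inr one_lt_two))
      (StrictRR.not_le_of_lt_or_lt (.inl one_lt_two))⟩
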